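/- Let P_t be a Markov semigroup with heat kernel p_t w.r.t. a probability measure μ satisfying the log-Harnack inequality P_t log f(y) ≤ log P_t f(x) + C ρ(x,y)² for all measurable f ≥ 1. Then the heat kernel lower bound p_{2t}(x,y) ≥ exp(−C' ρ(x,y)²) holds, where C' is the corresponding constant; specifically in the paper's setting, p_t(x,y) ≥ exp(−‖φ‖_∞²K_φ ρ(x,y)²/(2(e^{K_φ t}−1))). -/
import Mathlib


open MeasureTheory Filter

set_option maxHeartbeats 2000000 in
/-- heat kernel lower bound: let `P_t` be a Markov semigroup with heat
kernel `p_t` w.r.t. a probability measure `μ`, satisfying the Chapman–Kolmogorov identity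
`p_t(x,y) = ∫ p_{t/2}(x,z) p_{t/2}(y,z) μ(dz)` and the log-Harnack inequality
`P_s log f(y) ≤ log P_s f(x) + C_s ρ(x,y)²` for all measurable `f ≥ 1`, with
`C_s = ‖φ‖_∞²K_φ/(2(e^{2K_φ s}−1))`.  Then
`p_t(x,y) ≥ exp(−‖φ‖_∞²K_φ ρ(x,y)²/(2(e^{K_φ t}−1)))` for all `t > 0` and `x, y`. -/
theorem stmt10 {α : Type*} [MetricSpace α] [MeasurableSpace α]
    (μ : Measure α) [IsProbabilityMeasure μ]
    (p : ℝ → α → α → ℝ) (c K : ℝ)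
    (hpos : ∀ t > (0:ℝ), ∀ x z, 0 < p t x z)
    (hmeas : ∀ t x, Measurable (p t x))
    (hnorm : ∀ t > (0:ℝ), ∀ x, ∫ z, p t x z ∂μ = 1)
    (hCK : ∀ t > (0:ℝ), ∀ x y : α, p t x y = ∫ z, p (t/2) x z * p (t/2) y z ∂μ)
    (hLH : ∀ s > (0:ℝ), ∀ f : α → ℝ, Measurable f → (∀ z, 1 ≤ f z) → ∀ x y : α,
      ∫ z, p s y z * Real.log (f z) ∂μ
        ≤ Real.log (∫ z, p s x z * f z ∂μ)
          + (c ^ 2 * K / (2 * (Real.exp (2 * K * s) - 1))) * dist x y ^ 2) :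
    ∀ t > (0:ℝ), ∀ x y : α,
      Real.exp (-(c ^ 2 * K * dist x y ^ 2) / (2 * (Real.exp (K * t) - 1)))
        ≤ p t x y := by
  intro t ht x y
  set s : ℝ := t / 2 with hs
  have hs0 : (0:ℝ) < s := by positivity
  set h : α → ℝ := p s y with hh
  set k : α → ℝ := p s x with hk
  have hhm : Measurable h := hmeas s y
  have hkm : Measurable k := hmeas s x
  have hhpos : ∀ z, 0 < h z := fun z => hpos s hs0 y z
  have hkpos : ∀ z, 0 < k z := fun z => hpos s hs0 x z
  have hint1 : ∫ z, h z ∂μ = 1 := hnorm s hs0 y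
  have hkint1 : ∫ z, k z ∂μ = 1 := hnorm s hs0 x
  have hhint : Integrable h μ := by
    by_contra hc
    rw [integral_undef hc] at hint1; norm_num at hint1
  have hkint : Integrable k μ := by
    by_contra hc
    rw [integral_undef hc] at hkint1; norm_num at hkint1
  have hpt : p t x y = ∫ z, k z * h z ∂μ := hCK t ht x y
  have hptpos : (0:ℝ) < p t x y := hpos t ht x y
  have hkh : Integrable (fun z => k z * h z) μ := by
    by_contra hc
    rw [hpt, integral_undef hc] at hptpos; norm_num at hptpos
  set D : ℝ := c ^ 2 * K / (2 * (Real.exp (K * t) - 1)) * dist x y ^ 2 with hD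
  -- the log-Harnack constant at time s equals the one in D
  have hsK : 2 * K * s = K * t := by rw [hs]; ring
  -- Key inequality for parameters n (≥ 1) and M (≥ 1)
  have key : ∀ n : ℕ, 1 ≤ n → ∀ M : ℝ, 1 ≤ M →
      Real.exp ((∫ z, min (h z) M ∂μ) * Real.log (∫ z, min (h z) M ∂μ) - D) - 1 / n
        ≤ p t x y := by
    intro n hn M hM
    set g : α → ℝ := fun z => min (h z) M with hg
    have hgm : Measurable g := hhm.min measurable_const
    have hgpos : ∀ z, 0 < g z := fun z => lt_min (hhpos z) (by linarith)
    have hgleM : ∀ z, g z ≤ M := fun z => min_le_right _ _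
    have hgleh : ∀ z, g z ≤ h z := fun z => min_le_left _ _
    have hgint : Integrable g μ := by
      refine (integrable_const M).mono' hgm.aestronglyMeasurable ?_
      filter_upwards with z
      rw [Real.norm_eq_abs, abs_of_pos (hgpos z)]; exact hgleM z
    set a : ℝ := ∫ z, g z ∂μ with ha
    have hn0 : (0:ℝ) < n := by exact_mod_cast hn
    set f : α → ℝ := fun z => 1 + n * g z with hf
    have hfm : Measurable f := (hgm.const_mul _).const_add 1
    have hf1 : ∀ z, 1 ≤ f z := fun z => by
      have h1 := hgpos z
      have h2 : 0 ≤ (n:ℝ) * g z := by positivity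
      simp only [hf]; linarith
    have hfpos : ∀ z, 0 < f z := fun z => lt_of_lt_of_le one_pos (hf1 z)
    -- integrability of the various integrands
    have hlogM0 : 0 ≤ Real.log M := Real.log_nonneg hM
    have hIhlg : Integrable (fun z => h z * Real.log (g z)) μ := by
      refine ((hhint.const_mul (Real.log M)).add (integrable_const 1)).mono'
        (hhm.mul (Real.measurable_log.comp hgm)).aestronglyMeasurable ?_
      filter_upwards with z
      rw [Real.norm_eq_abs]
      have hbnn : 0 ≤ Real.log M * h z := mul_nonneg hlogM0 (hhpos z).le
      show |h z * Real.log (g z)| ≤ Real.log M * h z + 1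
      rcases le_or_gt (h z) M with hzM | hzM
      · have hgz : g z = h z := min_eq_left hzM
        rcases le_or_gt (h z) 1 with hz1 | hz1
        · have hlt : |Real.log (h z) * h z| < 1 :=
            Real.abs_log_mul_self_lt (h z) (hhpos z) hz1
          rw [hgz, mul_comm]
          linarith [le_of_lt hlt]
        · have h1 : 0 ≤ Real.log (h z) := Real.log_nonneg hz1.le
          have h2 : Real.log (h z) ≤ Real.log M := Real.log_le_log (hhpos z) hzM
          rw [hgz, abs_of_nonneg (mul_nonneg (hhpos z).le h1)]
          nlinarith [hhpos z]
      · have hgz : g z = M := min_eq_right hzM.le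
        rw [hgz, abs_of_nonneg (mul_nonneg (hhpos z).le hlogM0)]
        nlinarith
    have hIhlf : Integrable (fun z => h z * Real.log (f z)) μ := by
      refine (hhint.const_mul (Real.log (1 + n * M))).mono'
        (hhm.mul (Real.measurable_log.comp hfm)).aestronglyMeasurable ?_
      filter_upwards with z
      have h1 : 0 ≤ Real.log (f z) := Real.log_nonneg (hf1 z)
      have h2 : Real.log (f z) ≤ Real.log (1 + n * M) := by
        apply Real.log_le_log (hfpos z)
        have : (n:ℝ) * g z ≤ n * M := mul_le_mul_of_nonneg_left (hgleM z) hn0.le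
        simp only [hf]; linarith
      rw [Real.norm_eq_abs, abs_of_nonneg (mul_nonneg (hhpos z).le h1)]
      calc h z * Real.log (f z) ≤ h z * Real.log (1 + n * M) :=
            mul_le_mul_of_nonneg_left h2 (hhpos z).le
        _ = Real.log (1 + n * M) * h z := by ring
    have hIglg : Integrable (fun z => g z * Real.log (g z)) μ := by
      refine (integrable_const (1 + M * Real.log M)).mono'
        (hgm.mul (Real.measurable_log.comp hgm)).aestronglyMeasurable ?_
      filter_upwards with z
      rw [Real.norm_eq_abs]
      have hbnn : 0 ≤ M * Real.log M := mul_nonneg (by linarith) hlogM0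
      show |g z * Real.log (g z)| ≤ 1 + M * Real.log M
      rcases le_or_gt (g z) 1 with hz1 | hz1
      · have hlt : |Real.log (g z) * g z| < 1 :=
          Real.abs_log_mul_self_lt (g z) (hgpos z) hz1
        rw [mul_comm]
        linarith [le_of_lt hlt]
      · have h1 : 0 ≤ Real.log (g z) := Real.log_nonneg hz1.le
        have h2 : Real.log (g z) ≤ Real.log M := Real.log_le_log (hgpos z) (hgleM z)
        rw [abs_of_nonneg (mul_nonneg (hgpos z).le h1)]
        nlinarith [hgleM z, hgpos z]
    have hIkf : Integrable (fun z => k z * f z) μ := by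
      refine (hkint.const_mul (1 + n * M)).mono'
        (hkm.mul hfm).aestronglyMeasurable ?_
      filter_upwards with z
      have h2 : f z ≤ 1 + n * M := by
        have : (n:ℝ) * g z ≤ n * M := mul_le_mul_of_nonneg_left (hgleM z) hn0.le
        simp only [hf]; linarith
      have h3 : 0 ≤ k z * f z := mul_nonneg (hkpos z).le (by linarith [hf1 z])
      rw [Real.norm_eq_abs, abs_of_nonneg h3]
      calc k z * f z ≤ k z * (1 + n * M) := mul_le_mul_of_nonneg_left h2 (hkpos z).le
        _ = (1 + n * M) * k z := by ring
    -- the log-Harnack inequality applied to f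
    have hLHf := hLH s hs0 f hfm hf1 x y
    rw [hsK] at hLHf
    -- lower bound the left-hand side
    have hIsum : Integrable (fun z => h z * (Real.log n + Real.log (g z))) μ := by
      have heq : (fun z => h z * (Real.log n + Real.log (g z)))
          = fun z => Real.log n * h z + h z * Real.log (g z) := by
        funext z; ring
      rw [heq]; exact (hhint.const_mul _).add hIhlg
    have lower : Real.log n + a * Real.log a ≤ ∫ z, h z * Real.log (f z) ∂μ := by
      have step1 : ∫ z, h z * (Real.log n + Real.log (g z)) ∂μ
          ≤ ∫ z, h z * Real.log (f z) ∂μ := by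
        refine integral_mono hIsum hIhlf fun z => ?_
        have e1 : Real.log ((n:ℝ) * g z) = Real.log n + Real.log (g z) :=
          Real.log_mul (ne_of_gt hn0) (ne_of_gt (hgpos z))
        have e2 : Real.log ((n:ℝ) * g z) ≤ Real.log (f z) := by
          apply Real.log_le_log (mul_pos hn0 (hgpos z))
          simp only [hf]; linarith [hgpos z]
        have := mul_le_mul_of_nonneg_left (e1 ▸ e2) (hhpos z).le
        simpa using this
      have step2 : ∫ z, h z * (Real.log n + Real.log (g z)) ∂μ
          = Real.log n + ∫ z, h z * Real.log (g z) ∂μ := by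
        have heq : (fun z => h z * (Real.log n + Real.log (g z)))
            = fun z => Real.log n * h z + h z * Real.log (g z) := by
          funext z; ring
        rw [heq, integral_add (hhint.const_mul _) hIhlg, integral_const_mul, hint1,
          mul_one]
      have step3 : a * Real.log a ≤ ∫ z, h z * Real.log (g z) ∂μ := by
        have jensen : a * Real.log a ≤ ∫ z, g z * Real.log (g z) ∂μ := by
          have := Real.convexOn_mul_log.map_integral_le (μ := μ) (f := g)
            Real.continuous_mul_log.continuousOn isClosed_Ici
            (by filter_upwards with z; exact (hgpos z).le) hgint hIglg
          simpa using this
        refine le_trans jensen (integral_mono hIglg hIhlg fun z => ?_)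
        rcases le_or_gt (h z) M with hzM | hzM
        · show g z * Real.log (g z) ≤ h z * Real.log (g z)
          rw [show g z = h z from min_eq_left hzM]
        · have hgz : g z = M := min_eq_right hzM.le
          show g z * Real.log (g z) ≤ h z * Real.log (g z)
          rw [hgz]
          exact mul_le_mul_of_nonneg_right hzM.le (Real.log_nonneg hM)
      rw [step2] at step1
      linarith
    -- upper bound the right-hand side
    have hkf_ge : (1:ℝ) ≤ ∫ z, k z * f z ∂μ := by
      rw [← hkint1]
      refine integral_mono hkint hIkf fun z => ?_
      have := hf1 z
      nlinarith [hkpos z]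
    have upper : ∫ z, k z * f z ∂μ ≤ 1 + n * p t x y := by
      have point : ∀ z, k z * f z ≤ k z + n * (k z * h z) := by
        intro z
        have h1 : (n:ℝ) * g z ≤ n * h z := mul_le_mul_of_nonneg_left (hgleh z) hn0.le
        have hk0 := (hkpos z).le
        simp only [hf]
        nlinarith
      have hstep : ∫ z, k z * f z ∂μ ≤ ∫ z, k z + n * (k z * h z) ∂μ :=
        integral_mono hIkf (hkint.add (hkh.const_mul _)) point
      rw [integral_add hkint (hkh.const_mul _), integral_const_mul, hkint1, ← hpt]
        at hstep
      exact hstep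
    -- combine
    have combined : Real.log n + a * Real.log a ≤ Real.log (1 + n * p t x y) + D := by
      have hlog : Real.log (∫ z, k z * f z ∂μ) ≤ Real.log (1 + n * p t x y) :=
        Real.log_le_log (by linarith) upper
      calc Real.log n + a * Real.log a ≤ ∫ z, h z * Real.log (f z) ∂μ := lower
        _ ≤ Real.log (∫ z, k z * f z ∂μ) + D := hLHf
        _ ≤ Real.log (1 + n * p t x y) + D := by linarith
    have hposn : (0:ℝ) < 1 + n * p t x y := by
      have h1 : 0 ≤ (n:ℝ) * p t x y := mul_nonneg hn0.le hptpos.le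
      linarith
    have hexp : (n:ℝ) * Real.exp (a * Real.log a - D) ≤ 1 + n * p t x y := by
      have h1 : Real.exp (Real.log n + (a * Real.log a - D))
          ≤ Real.exp (Real.log (1 + n * p t x y)) :=
        Real.exp_le_exp.mpr (by linarith)
      rwa [Real.exp_add, Real.exp_log hn0, Real.exp_log hposn] at h1
    have hQ : Real.exp (a * Real.log a - D) ≤ 1 / n + p t x y := by
      have h2 : (n:ℝ) * Real.exp (a * Real.log a - D)
          ≤ n * (1 / n + p t x y) := by
        rw [mul_add, mul_one_div, div_self (ne_of_gt hn0)]
        linarith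
      exact le_of_mul_le_mul_left h2 hn0
    linarith
  -- pass to the limit
  have hDgoal : -(c ^ 2 * K * dist x y ^ 2) / (2 * (Real.exp (K * t) - 1)) = -D := by
    rw [hD]; ring
  rw [hDgoal]
  refine le_of_forall_sub_le fun ε hε => ?_
  -- a M → 1 as M → ∞ (along naturals)
  have hconv : Tendsto (fun m : ℕ => ∫ z, min (h z) (m:ℝ) ∂μ) atTop (nhds 1) := by
    rw [← hint1]
    refine tendsto_integral_of_dominated_convergence h
      (fun m => (hhm.min measurable_const).aestronglyMeasurable) hhint ?_ ?_
    · intro m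
      filter_upwards with z
      rw [Real.norm_eq_abs,
        abs_of_nonneg (le_min (hhpos z).le (Nat.cast_nonneg m))]
      exact min_le_left _ _
    · filter_upwards with z
      refine tendsto_nhds_of_eventually_eq ?_
      filter_upwards [eventually_ge_atTop ⌈h z⌉₊] with m hm
      exact min_eq_left ((Nat.le_ceil (h z)).trans (by exact_mod_cast hm))
  have hconv2 : Tendsto (fun m : ℕ =>
      Real.exp ((∫ z, min (h z) (m:ℝ) ∂μ) * Real.log (∫ z, min (h z) (m:ℝ) ∂μ) - D))
      atTop (nhds (Real.exp (-D))) := by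
    have hc : Continuous fun u : ℝ => Real.exp (u * Real.log u - D) :=
      Real.continuous_exp.comp (Real.continuous_mul_log.sub continuous_const)
    have h2 : Tendsto (fun m : ℕ =>
        Real.exp ((∫ z, min (h z) (m:ℝ) ∂μ) * Real.log (∫ z, min (h z) (m:ℝ) ∂μ) - D))
        atTop (nhds (Real.exp (1 * Real.log 1 - D))) := (hc.tendsto 1).comp hconv
    rwa [Real.log_one, mul_zero, zero_sub] at h2
  have hev : ∀ᶠ m : ℕ in atTop,
      Real.exp (-D) - ε / 2 ≤ Real.exp ((∫ z, min (h z) (m:ℝ) ∂μ) *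
        Real.log (∫ z, min (h z) (m:ℝ) ∂μ) - D) :=
    hconv2.eventually (eventually_ge_nhds (by linarith))
  obtain ⟨n, hn1, hn2⟩ : ∃ n : ℕ, 1 ≤ n ∧ (1:ℝ) / n ≤ ε / 2 := by
    obtain ⟨n, hn⟩ := exists_nat_one_div_lt (show (0:ℝ) < ε / 2 by linarith)
    refine ⟨n + 1, Nat.le_add_left 1 n, ?_⟩
    push_cast
    linarith
  obtain ⟨m, hm1, hm2⟩ : ∃ m : ℕ, 1 ≤ m ∧ Real.exp (-D) - ε / 2
      ≤ Real.exp ((∫ z, min (h z) (m:ℝ) ∂μ) *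
        Real.log (∫ z, min (h z) (m:ℝ) ∂μ) - D) := by
    obtain ⟨m₀, hm₀⟩ := eventually_atTop.mp hev
    exact ⟨max m₀ 1, le_max_right _ _, hm₀ _ (le_max_left _ _)⟩
  have hMm : (1:ℝ) ≤ (m:ℝ) := by exact_mod_cast hm1
  have hkey := key n hn1 (m:ℝ) hMm
  linarith
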